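/- arXiv:math/0611759 — 3 statements merged into one kernel-verified Lean document; each statement's English description precedes it below -/
import Mathlib

section
/- Let P be a bounded poset of finite rank such that for any p, q ∈ P, if p and q both cover a common element w, then the join p ∨ q exists in P. Then P is a lattice. -/
/-- Lemma 2.1 of Björner–Edelman–Ziegler: a bounded poset of finite rank in which any
two elements covering a common element have a join is a lattice (every pair of elements
has a least upper bound and a greatest lower bound). -/
theorem covering_lemma (P : Type*) [PartialOrder P] [BoundedOrder P]
    (hchain : ∀ c : Set P, IsChain (· ≤ ·) c → c.Finite)
    (ρ : P → ℕ) (hρ : ∀ a b : P, a ⋖ b → ρ b = ρ a + 1)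
    (hjoin : ∀ p q w : P, w ⋖ p → w ⋖ q → ∃ s, IsLUB ({p, q} : Set P) s) :
    ∀ a b : P, (∃ s, IsLUB ({a, b} : Set P) s) ∧ (∃ i, IsGLB ({a, b} : Set P) i) := by
  -- no infinite monotone sequences
  have noseq : ∀ f : ℕ → P, StrictMono f → False := by
    intro f hf
    have hc : IsChain (· ≤ ·) (Set.range f) := by
      rintro _ ⟨m, rfl⟩ _ ⟨n, rfl⟩ _
      rcases le_total m n with h | h
      · exact Or.inl (hf.monotone h)
      · exact Or.inr (hf.monotone h)
    have hfin := hchain _ hc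
    exact Set.infinite_range_of_injective hf.injective hfin
  have wfGT : WellFounded ((· > ·) : P → P → Prop) := by
    rw [RelEmbedding.wellFounded_iff_isEmpty]
    constructor
    intro f
    exact noseq f (strictMono_nat_of_lt_succ fun n => f.map_rel_iff.2 (Nat.lt_succ_self n))
  have noseq' : ∀ f : ℕ → P, StrictAnti f → False := by
    intro f hf
    have hc : IsChain (· ≤ ·) (Set.range f) := by
      rintro _ ⟨m, rfl⟩ _ ⟨n, rfl⟩ _
      rcases le_total m n with h | h
      · exact Or.inr (hf.antitone h)
      · exact Or.inl (hf.antitone h)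
    have hfin := hchain _ hc
    exact Set.infinite_range_of_injective hf.injective hfin
  have wfLT : WellFounded ((· < ·) : P → P → Prop) := by
    rw [RelEmbedding.wellFounded_iff_isEmpty]
    constructor
    intro f
    exact noseq' f (strictAnti_nat_of_succ_lt fun n => f.map_rel_iff.2 (Nat.lt_succ_self n))
  -- covers exist below any element above w
  have hcov : ∀ w p : P, w < p → ∃ p', w ⋖ p' ∧ p' ≤ p := by
    intro w p hwp
    obtain ⟨m, hm, hmin⟩ := wfLT.has_min {x | w < x ∧ x ≤ p} ⟨p, hwp, le_rfl⟩
    exact ⟨m, ⟨hm.1, fun y hy h2 => hmin y ⟨hy, h2.le.trans hm.2⟩ h2⟩, hm.2⟩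
  -- helper : IsLUB {x, y} y when x ≤ y
  have lub_right : ∀ {x y : P}, x ≤ y → IsLUB ({x, y} : Set P) y := by
    intro x y h
    constructor
    · rintro z (rfl | rfl)
      · exact h
      · exact le_rfl
    · intro z hz
      exact hz (Set.mem_insert_of_mem _ rfl)
  -- main claim: any two elements with a common lower bound have a join
  have key : ∀ w p q : P, w ≤ p → w ≤ q → ∃ s, IsLUB ({p, q} : Set P) s := by
    intro w
    induction w using wfGT.induction with
    | _ w IH =>
      intro p q hwp hwq
      rcases eq_or_lt_of_le hwp with rfl | hwp'
      · exact ⟨q, lub_right hwq⟩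
      rcases eq_or_lt_of_le hwq with rfl | hwq'
      · refine ⟨p, ?_⟩
        rw [Set.pair_comm]
        exact lub_right hwp
      obtain ⟨p', hp'cov, hp'le⟩ := hcov w p hwp'
      obtain ⟨q', hq'cov, hq'le⟩ := hcov w q hwq'
      by_cases hpq : p' = q'
      · exact IH p' hp'cov.lt p q hp'le (hpq ▸ hq'le)
      · obtain ⟨s, hs⟩ := hjoin p' q' w hp'cov hq'cov
        have hsp' : p' ≤ s := hs.1 (Set.mem_insert _ _)
        have hsq' : q' ≤ s := hs.1 (Set.mem_insert_of_mem _ rfl)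
        obtain ⟨t, ht⟩ := IH p' hp'cov.lt p s hp'le hsp'
        have htp : p ≤ t := ht.1 (Set.mem_insert _ _)
        have hts : s ≤ t := ht.1 (Set.mem_insert_of_mem _ rfl)
        obtain ⟨u, hu⟩ := IH q' hq'cov.lt t q (hsq'.trans hts) hq'le
        have hut : t ≤ u := hu.1 (Set.mem_insert _ _)
        have huq : q ≤ u := hu.1 (Set.mem_insert_of_mem _ rfl)
        refine ⟨u, ?_, ?_⟩
        · rintro z (rfl | rfl)
          · exact htp.trans hut
          · exact huq
        · intro v hv
          have hvp : p ≤ v := hv (Set.mem_insert _ _)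
          have hvq : q ≤ v := hv (Set.mem_insert_of_mem _ rfl)
          have hvs : s ≤ v := hs.2 (by
            rintro z (rfl | rfl)
            · exact hp'le.trans hvp
            · exact hq'le.trans hvq)
          have hvt : t ≤ v := ht.2 (by
            rintro z (rfl | rfl)
            · exact hvp
            · exact hvs)
          exact hu.2 (by
            rintro z (rfl | rfl)
            · exact hvt
            · exact hvq)
  intro a b
  refine ⟨key ⊥ a b bot_le bot_le, ?_⟩
  obtain ⟨m, hm, hmax⟩ := wfGT.has_min (lowerBounds {a, b}) ⟨⊥, fun z _ => bot_le⟩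
  refine ⟨m, hm, fun x hx => ?_⟩
  obtain ⟨s, hs⟩ := key ⊥ x m bot_le bot_le
  have hsa : s ≤ a := hs.2 (by
    rintro z (rfl | rfl)
    · exact hx (Set.mem_insert _ _)
    · exact hm (Set.mem_insert _ _))
  have hsb : s ≤ b := hs.2 (by
    rintro z (rfl | rfl)
    · exact hx (Set.mem_insert_of_mem _ rfl)
    · exact hm (Set.mem_insert_of_mem _ rfl))
  have hsL : s ∈ lowerBounds ({a, b} : Set P) := by
    rintro z (rfl | rfl)
    · exact hsa
    · exact hsb
  have hms : m ≤ s := hs.1 (Set.mem_insert_of_mem _ rfl)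
  have : s = m := by
    by_contra hne
    exact hmax s hsL (lt_of_le_of_ne hms (Ne.symm hne))
  exact (hs.1 (Set.mem_insert _ _)).trans this.le
end

section
/- Let A be a finite linear hyperplane arrangement and let C, C₁, C₂ be chambers with C₁ ≤ C₂ in the poset of regions P_C(A). Then the interval [C₁, C₂] in P_C(A) is isomorphic as a poset to the lower interval (P_{C₁}(A))_{≤ C₂} in the poset of regions with base chamber C₁. -/
open scoped Classical
noncomputable section

/-- Ambient real vector space `ℝ^d`. -/
abbrev EucV (d : ℕ) := Fin d → ℝ

/-- The complement of the arrangement given by the kernels of the linear forms in `A`. -/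
def hypCompl {d : ℕ} (A : Finset (EucV d →ₗ[ℝ] ℝ)) : Set (EucV d) :=
  {x | ∀ f ∈ A, f x ≠ 0}

/-- A chamber of the arrangement: a connected component of the complement. -/
def IsChamber {d : ℕ} (A : Finset (EucV d →ₗ[ℝ] ℝ)) (C : Set (EucV d)) : Prop :=
  ∃ x ∈ hypCompl A, C = connectedComponentIn (hypCompl A) x

/-- The hyperplane `ker f` separates `C` from `C'`. -/
def SepBy {d : ℕ} (f : EucV d →ₗ[ℝ] ℝ) (C C' : Set (EucV d)) : Prop :=
  ∃ x ∈ C, ∃ y ∈ C', f x * f y < 0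

/-- The set `S(C,C')` of hyperplanes of `A` separating `C` from `C'`. -/
def sepSet {d : ℕ} (A : Finset (EucV d →ₗ[ℝ] ℝ)) (C C' : Set (EucV d)) :
    Set (EucV d →ₗ[ℝ] ℝ) :=
  {f | f ∈ A ∧ SepBy f C C'}

/-! Each form of `A` has constant sign on a chamber (chambers are connected and avoid its
kernel), so separation is read off from signs at sample points, and sign multiplicativity gives
`S(C₁, D) = S(C, C₁) ∆ S(C, D)` for every chamber `D`. In a Boolean algebra, `x ↦ t ∆ x` maps
the interval `[t, s]` order-isomorphically onto the elements below `t ∆ s`; with `t = S(C, C₁)`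
and `s = S(C, C₂)` the required equivalence is the identity on chambers. -/

open scoped symmDiff

section SymmDiff

variable {α : Type*} [GeneralizedBooleanAlgebra α] {t s x y : α}

theorem symmDiff_le_symmDiff_iff_of_le (hx : t ≤ x) (hy : t ≤ y) : t ∆ x ≤ t ∆ y ↔ x ≤ y := by
  rw [symmDiff_of_le hx, symmDiff_of_le hy, sdiff_le_iff, sup_sdiff_cancel_right hy]

theorem symmDiff_le_symmDiff_iff_mem_Icc (hs : t ≤ s) : t ∆ x ≤ t ∆ s ↔ t ≤ x ∧ x ≤ s := by
  refine ⟨fun h => ?_, fun ⟨htx, hxs⟩ => (symmDiff_le_symmDiff_iff_of_le htx hs).2 hxs⟩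
  have htx : t ≤ x := by
    have hle : t \ x ≤ s \ t := (le_sup_left.trans_eq (symmDiff_def t x).symm).trans
      (h.trans_eq (symmDiff_of_le hs))
    exact sdiff_eq_bot_iff.1 ((disjoint_sdiff_self_right.mono_left sdiff_le).eq_bot_of_le hle)
  exact ⟨htx, (symmDiff_le_symmDiff_iff_of_le htx hs).1 h⟩

end SymmDiff

theorem mul_neg_iff_xor_of_ne_zero {α : Type*} [Field α] [LinearOrder α] [IsStrictOrderedRing α]
    {a b c : α} (ha : a ≠ 0) (hb : b ≠ 0) (hc : c ≠ 0) :
    b * c < 0 ↔ (a * b < 0 ∧ ¬a * c < 0 ∨ a * c < 0 ∧ ¬a * b < 0) := by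
  rcases ha.lt_or_gt with ha | ha <;> rcases hb.lt_or_gt with hb | hb <;>
    rcases hc.lt_or_gt with hc | hc <;>
    simp [mul_neg_iff, ha, hb, hc, ha.not_gt, hb.not_gt, hc.not_gt]

namespace IsChamber

variable {d : ℕ} {A : Finset (EucV d →ₗ[ℝ] ℝ)} {D : Set (EucV d)}

theorem nonempty (hD : IsChamber A D) : D.Nonempty := by
  obtain ⟨p, hp, rfl⟩ := hD
  exact ⟨p, mem_connectedComponentIn hp⟩

theorem subset_hypCompl (hD : IsChamber A D) : D ⊆ hypCompl A := by
  obtain ⟨p, hp, rfl⟩ := hD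
  exact connectedComponentIn_subset _ _

theorem isPreconnected (hD : IsChamber A D) : IsPreconnected D := by
  obtain ⟨p, hp, rfl⟩ := hD
  exact isPreconnected_connectedComponentIn

theorem mul_pos {f : EucV d →ₗ[ℝ] ℝ} (hf : f ∈ A) (hD : IsChamber A D) {x y : EucV d}
    (hx : x ∈ D) (hy : y ∈ D) : 0 < f x * f y := by
  have hne : ∀ z ∈ D, f z ≠ 0 := fun z hz => hD.subset_hypCompl hz f hf
  have hcont : ContinuousOn f D := f.continuous_of_finiteDimensional.continuousOn
  refine lt_of_le_of_ne (not_lt.1 fun hneg => ?_) (mul_ne_zero (hne x hx) (hne y hy)).symm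
  rcases mul_neg_iff.1 hneg with ⟨hfx, hfy⟩ | ⟨hfx, hfy⟩
  · obtain ⟨z, hz, hz0⟩ := hD.isPreconnected.intermediate_value hy hx hcont ⟨hfy.le, hfx.le⟩
    exact hne z hz hz0
  · obtain ⟨z, hz, hz0⟩ := hD.isPreconnected.intermediate_value hx hy hcont ⟨hfx.le, hfy.le⟩
    exact hne z hz hz0

end IsChamber

section Separation

variable {d : ℕ} {A : Finset (EucV d →ₗ[ℝ] ℝ)} {f : EucV d →ₗ[ℝ] ℝ} {P Q R : Set (EucV d)}

theorem sepBy_iff_mul_neg (hf : f ∈ A) (hP : IsChamber A P) (hQ : IsChamber A Q)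
    {x y : EucV d} (hx : x ∈ P) (hy : y ∈ Q) : SepBy f P Q ↔ f x * f y < 0 := by
  refine ⟨fun ⟨x', hx', y', hy', h⟩ => ?_, fun h => ⟨x, hx, y, hy, h⟩⟩
  have hxx' := hP.mul_pos hf hx hx'
  have hyy' := hQ.mul_pos hf hy hy'
  nlinarith

theorem sepSet_eq_symmDiff (hP : IsChamber A P) (hQ : IsChamber A Q) (hR : IsChamber A R) :
    sepSet A Q R = sepSet A P Q ∆ sepSet A P R := by
  obtain ⟨p, hp⟩ := hP.nonempty
  obtain ⟨q, hq⟩ := hQ.nonempty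
  obtain ⟨r, hr⟩ := hR.nonempty
  ext f
  by_cases hf : f ∈ A
  · simp only [sepSet, Set.mem_symmDiff, Set.mem_ofPred_eq, hf, true_and,
      sepBy_iff_mul_neg hf hQ hR hq hr, sepBy_iff_mul_neg hf hP hQ hp hq,
      sepBy_iff_mul_neg hf hP hR hp hr]
    exact mul_neg_iff_xor_of_ne_zero (hP.subset_hypCompl hp f hf) (hQ.subset_hypCompl hq f hf)
      (hR.subset_hypCompl hr f hf)
  · simp [sepSet, Set.mem_symmDiff, hf]

end Separation

theorem interval_iso_general {d : ℕ} (A : Finset (EucV d →ₗ[ℝ] ℝ))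
    (C C₁ C₂ : Set (EucV d))
    (hC : IsChamber A C) (hC₁ : IsChamber A C₁) (hC₂ : IsChamber A C₂)
    (h12 : sepSet A C C₁ ⊆ sepSet A C C₂) :
    ∃ e : {D : Set (EucV d) // IsChamber A D ∧ sepSet A C C₁ ⊆ sepSet A C D ∧
            sepSet A C D ⊆ sepSet A C C₂} ≃
          {D : Set (EucV d) // IsChamber A D ∧ sepSet A C₁ D ⊆ sepSet A C₁ C₂},
      ∀ X Y, sepSet A C X.1 ⊆ sepSet A C Y.1 ↔
        sepSet A C₁ (e X).1 ⊆ sepSet A C₁ (e Y).1 := by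
  have rebase : ∀ {D}, IsChamber A D → sepSet A C₁ D = sepSet A C C₁ ∆ sepSet A C D :=
    sepSet_eq_symmDiff hC hC₁
  refine ⟨Equiv.subtypeEquivRight fun D => and_congr_right fun hD => ?_, fun X Y => ?_⟩
  · rw [rebase hD, rebase hC₂]
    exact (symmDiff_le_symmDiff_iff_mem_Icc h12).symm
  · rw [Equiv.subtypeEquivRight_apply_coe, Equiv.subtypeEquivRight_apply_coe, rebase X.2.1,
      rebase Y.2.1]
    exact (symmDiff_le_symmDiff_iff_of_le X.2.2.1 Y.2.2.1).symm

/-- The interval `[C₁, C₂]` in the poset of regions `P_C(A)` is isomorphic as a poset to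
the lower interval `(P_{C₁}(A))_{≤ C₂}` in the poset of regions with base chamber `C₁`. -/
theorem interval_iso {d : ℕ} (A : Finset (EucV d →ₗ[ℝ] ℝ))
    (hA : ∀ f ∈ A, f ≠ 0) (C C₁ C₂ : Set (EucV d))
    (hC : IsChamber A C) (hC₁ : IsChamber A C₁) (hC₂ : IsChamber A C₂)
    (h12 : sepSet A C C₁ ⊆ sepSet A C C₂) :
    ∃ e : {D : Set (EucV d) // IsChamber A D ∧ sepSet A C C₁ ⊆ sepSet A C D ∧
            sepSet A C D ⊆ sepSet A C C₂} ≃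
          {D : Set (EucV d) // IsChamber A D ∧ sepSet A C₁ D ⊆ sepSet A C₁ C₂},
      ∀ X Y, sepSet A C X.1 ⊆ sepSet A C Y.1 ↔
        sepSet A C₁ (e X).1 ⊆ sepSet A C₁ (e Y).1 :=
  interval_iso_general A C C₁ C₂ hC hC₁ hC₂ h12
end
end

section
/- Let P be a finite bounded graded poset that is not a lattice. Then there exist elements a, b, w ∈ P such that a and b both cover w and the join a ∨ b does not exist in P. -/
/-!
By downward induction on `w`, any two elements `a, b` above `w` have a join. If
`w < a` and `w < b`, pick covers `w ⋖ a₁ ≤ a` and `w ⋖ b₁ ≤ b`; then `c = a₁ ⊔ b₁` exists by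
hypothesis, `d = a ⊔ c` exists by induction at `a₁`, and `e = b ⊔ d` by induction at `b₁`, and
`e` is the join of `a` and `b`. In a finite poset with `⊥` and binary joins, meets exist too:
`a ⊓ b` is the join of the (finite, nonempty) set of common lower bounds.
-/

open Set

section

variable {P : Type*} [PartialOrder P]

theorem isLUB_pair_iff_le_iff {a b s : P} :
    IsLUB {a, b} s ↔ ∀ x, s ≤ x ↔ a ≤ x ∧ b ≤ x := by
  simp [isLUB_iff_le_iff, upperBounds_insert, upperBounds_singleton]

theorem isLUB_pair_of_le {a b : P} (h : a ≤ b) : IsLUB {a, b} b :=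
  isLUB_pair_iff_le_iff.2 fun _ => ⟨fun hb => ⟨h.trans hb, hb⟩, And.right⟩

theorem IsLUB.insert_of_isLUB_pair {s : Set P} {a x y : P} (hs : IsLUB s x)
    (hy : IsLUB {a, x} y) : IsLUB (insert a s) y := by
  rwa [isLUB_congr (t := {a, x}) (by simp [upperBounds_insert, hs.upperBounds_eq])]

theorem Set.Finite.exists_isLUB_of_forall_isLUB_pair [OrderBot P]
    (hpair : ∀ a b : P, ∃ s, IsLUB {a, b} s) {s : Set P} (hs : s.Finite) :
    ∃ x, IsLUB s x := by
  induction s, hs using Set.Finite.induction_on with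
  | empty => exact ⟨⊥, isLUB_empty⟩
  | @insert a s _ _ ih =>
    obtain ⟨x, hx⟩ := ih
    obtain ⟨y, hy⟩ := hpair a x
    exact ⟨y, hx.insert_of_isLUB_pair hy⟩

theorem exists_isGLB_pair_of_forall_isLUB_pair [Finite P] [OrderBot P]
    (hpair : ∀ a b : P, ∃ s, IsLUB {a, b} s) (a b : P) : ∃ i, IsGLB {a, b} i := by
  obtain ⟨i, hi⟩ := (toFinite (lowerBounds {a, b})).exists_isLUB_of_forall_isLUB_pair hpair
  exact ⟨i, isLUB_lowerBounds.1 hi⟩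

/-- The covering lemma of Björner–Edelman–Ziegler. -/
theorem exists_isLUB_pair_of_covBy [IsStronglyAtomic P] [WellFoundedGT P]
    (hcov : ∀ w a b : P, w ⋖ a → w ⋖ b → ∃ s, IsLUB {a, b} s)
    {w a b : P} (hwa : w ≤ a) (hwb : w ≤ b) : ∃ s, IsLUB {a, b} s := by
  induction w using WellFoundedGT.induction generalizing a b with
  | _ w ih =>
    rcases hwa.eq_or_lt with rfl | hwa
    · exact ⟨b, isLUB_pair_of_le hwb⟩
    rcases hwb.eq_or_lt with rfl | hwb
    · exact ⟨a, Set.pair_comm a w ▸ isLUB_pair_of_le hwa.le⟩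
    obtain ⟨a₁, hwa₁, ha₁a⟩ := exists_covBy_le_of_lt hwa
    obtain ⟨b₁, hwb₁, hb₁b⟩ := exists_covBy_le_of_lt hwb
    obtain ⟨c, hc⟩ := hcov w a₁ b₁ hwa₁ hwb₁
    obtain ⟨d, hd⟩ := ih a₁ hwa₁.lt ha₁a (hc.1 (by simp))
    obtain ⟨e, he⟩ := ih b₁ hwb₁.lt hb₁b ((hc.1 (by simp)).trans (hd.1 (by simp)))
    refine ⟨e, isLUB_pair_iff_le_iff.2 fun x => ?_⟩
    rw [isLUB_pair_iff_le_iff.1 he, isLUB_pair_iff_le_iff.1 hd, isLUB_pair_iff_le_iff.1 hc]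
    exact ⟨fun ⟨hb, ha, _⟩ => ⟨ha, hb⟩,
      fun ⟨ha, hb⟩ => ⟨hb, ha, ha₁a.trans ha, hb₁b.trans hb⟩⟩

end

theorem not_lattice_covering_general (P : Type*) [Fintype P] [PartialOrder P] [BoundedOrder P]
    (hnot : ¬ ∀ a b : P, (∃ s, IsLUB ({a, b} : Set P) s) ∧ (∃ i, IsGLB ({a, b} : Set P) i)) :
    ∃ a b w : P, w ⋖ a ∧ w ⋖ b ∧ ¬ ∃ s, IsLUB ({a, b} : Set P) s := by
  by_contra! hcov
  have hpair : ∀ a b : P, ∃ s, IsLUB {a, b} s := fun a b =>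
    exists_isLUB_pair_of_covBy (fun w a b hwa hwb => hcov a b w hwa hwb) bot_le bot_le
  exact hnot fun a b => ⟨hpair a b, exists_isGLB_pair_of_forall_isLUB_pair hpair a b⟩

/-- Contrapositive of the covering lemma: a finite bounded graded poset that is not a
lattice contains two elements covering a common element whose join does not exist. -/
theorem not_lattice_covering (P : Type*) [Fintype P] [PartialOrder P] [BoundedOrder P]
    (ρ : P → ℕ) (hρ : ∀ a b : P, a ⋖ b → ρ b = ρ a + 1)
    (hnot : ¬ ∀ a b : P, (∃ s, IsLUB ({a, b} : Set P) s) ∧ (∃ i, IsGLB ({a, b} : Set P) i)) :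
    ∃ a b w : P, w ⋖ a ∧ w ⋖ b ∧ ¬ ∃ s, IsLUB ({a, b} : Set P) s :=
  not_lattice_covering_general P hnot
end
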